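/- arXiv:1308.3272 — 2 statements merged into one kernel-verified Lean document; each statement's English description precedes it below -/
import Mathlib

section
/- For every integer K ≥ 2 and every ω ∈ (0,1), the achievable sum-DoF d(ω) of Theorem 1 strictly exceeds the ZF-TDMA baseline d_ZF-TDMA(ω) = (K−2)ω + 1, provided K ≥ 3. Moreover d(0) = d_ZF-TDMA(0) = 1 and d(1) = d_ZF-TDMA(1) = K−1. -/
/-!
On the first segment d has the baseline's intercept and the larger slope K − 1, and on the last
segment d is the value K − 1 that the baseline reaches only at ω = 1. On the middle segment
a(K) = (K − 2) b(K), so d is b(K) times the baseline, and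
b(K) = K(K − 1) / ((K − 1)² + 1) exceeds 1 exactly when K > 2.
-/

namespace SumDoF

lemma middle_denom_pos (K : ℝ) : 0 < (K - 1) * (K - 2) + K := by
  nlinarith [sq_nonneg (K - 1)]

lemma middle_piece_eq (K ω : ℝ) :
    K * (K - 1) * (K - 2) / ((K - 1) * (K - 2) + K) * ω + K * (K - 1) / ((K - 1) * (K - 2) + K)
      = K * (K - 1) / ((K - 1) * (K - 2) + K) * ((K - 2) * ω + 1) := by
  ring

lemma one_lt_middle_intercept {K : ℝ} (hK : 2 < K) :
    1 < K * (K - 1) / ((K - 1) * (K - 2) + K) := by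
  rw [one_lt_div (middle_denom_pos K)]
  nlinarith

lemma baseline_lt_middle_piece {K ω : ℝ} (hK : 2 < K) (hω : 0 ≤ ω) :
    (K - 2) * ω + 1
      < K * (K - 1) * (K - 2) / ((K - 1) * (K - 2) + K) * ω
        + K * (K - 1) / ((K - 1) * (K - 2) + K) := by
  rw [middle_piece_eq]
  exact lt_mul_of_one_lt_left (by nlinarith) (one_lt_middle_intercept hK)

lemma baseline_lt_first_piece {K ω : ℝ} (hω : 0 < ω) : (K - 2) * ω + 1 < (K - 1) * ω + 1 := by
  linarith

lemma baseline_lt_last_piece {K ω : ℝ} (hK : 2 < K) (hω : ω < 1) : (K - 2) * ω + 1 < K - 1 := by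
  linarith [mul_lt_of_lt_one_right (sub_pos.mpr hK) hω]

lemma first_breakpoint_nonneg {K : ℝ} (hK : 2 ≤ K) : 0 ≤ (K - 2) / (2 * (K - 1)) :=
  div_nonneg (by linarith) (by linarith)

lemma first_breakpoint_lt_one {K : ℝ} (hK : 2 ≤ K) : (K - 2) / (2 * (K - 1)) < 1 :=
  (div_lt_one (by linarith)).mpr (by linarith)

lemma second_breakpoint_lt_one {K : ℝ} (hK : 0 < K) : (K - 1) / K < 1 :=
  (div_lt_one hK).mpr (by linarith)

end SumDoF

open SumDoF in
theorem dof_gain_over_zf_tdma (K : ℕ) (hK : 2 ≤ K) :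
    let Kr : ℝ := (K : ℝ)
    let a : ℝ := Kr * (Kr - 1) * (Kr - 2) / ((Kr - 1) * (Kr - 2) + Kr)
    let b : ℝ := Kr * (Kr - 1) / ((Kr - 1) * (Kr - 2) + Kr)
    let d : ℝ → ℝ := fun ω =>
      if ω ≤ (Kr - 2) / (2 * (Kr - 1)) then (Kr - 1) * ω + 1
      else if ω ≤ (Kr - 1) / Kr then a * ω + b
      else Kr - 1
    (d 0 = 1) ∧ ((Kr - 2) * 0 + 1 = 1) ∧
    (d 1 = Kr - 1) ∧ ((Kr - 2) * 1 + 1 = Kr - 1) ∧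
    (3 ≤ K → ∀ ω ∈ Set.Ioo (0 : ℝ) 1, (Kr - 2) * ω + 1 < d ω) := by
  intro Kr a b d
  have hK2 : (2 : ℝ) ≤ Kr := Nat.ofNat_le_cast.mpr hK
  refine ⟨?_, by ring, ?_, by ring, ?_⟩
  · simp only [d, if_pos (first_breakpoint_nonneg hK2)]
    ring
  · simp only [d]
    rw [if_neg (first_breakpoint_lt_one hK2).not_ge,
      if_neg (second_breakpoint_lt_one (by linarith)).not_ge]
  · intro hK3 ω ⟨hω0, hω1⟩
    have hK3r : (2 : ℝ) < Kr := Nat.ofNat_lt_cast.mpr hK3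
    simp only [d]
    split_ifs
    · exact baseline_lt_first_piece hω0
    · exact baseline_lt_middle_piece hK3r hω0.le
    · exact baseline_lt_last_piece hK3r hω1
end

section
/- For K = 3, the function d*(γ) of Corollary 1 is continuous and nonincreasing on [0, ∞), equals the cut-set bound 2 exactly on [0, 1/3], and equals 3/2 for all γ ≥ 1; consequently the largest normalized delay for which the full DoF 2 is retained is γ = 1/3. -/
/-! The curve is the line `γ ↦ -(3/4) γ + 9/4` clipped to the band `[3/2, 2]`: it meets the
cut-set bound `2` at `γ = 1/3` and the floor `3/2` at `γ = 1`. As a `max`/`min` of a continuous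
antitone function with constants it is continuous and antitone, and since the line drops strictly
below `2` after `1/3`, the bound `2` is attained exactly on `[0, 1/3]`. -/

theorem ite_ite_eq_max_min {f : ℝ → ℝ} (hf : Antitone f) {p q a b : ℝ} (hpq : p ≤ q)
    (hp : f p = b) (hq : f q = a) (x : ℝ) :
    (if x ≤ p then b else if x ≤ q then f x else a) = max a (min b (f x)) := by
  have hab : a ≤ b := hp ▸ hq ▸ hf hpq
  split_ifs with hxp hxq
  · rw [min_eq_left (hp ▸ hf hxp), max_eq_right hab]
  · rw [min_eq_right (hp ▸ hf (not_le.mp hxp).le), max_eq_right (hq ▸ hf hxq)]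
  · rw [max_eq_left ((min_le_right _ _).trans (hq ▸ hf (not_le.mp hxq).le))]

theorem antitone_affine_of_nonpos {m : ℝ} (hm : m ≤ 0) (c : ℝ) : Antitone fun x : ℝ => m * x + c :=
  fun _ _ hxy => by dsimp only; nlinarith

theorem corollary1_properties :
    let d : ℝ → ℝ := fun γ =>
      if γ ≤ 1 / 3 then 2 else if γ ≤ 1 then -(3 / 4) * γ + 9 / 4 else 3 / 2
    ContinuousOn d (Set.Ici 0) ∧
    AntitoneOn d (Set.Ici 0) ∧
    (∀ γ : ℝ, 0 ≤ γ → (d γ = 2 ↔ γ ≤ 1 / 3)) ∧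
    (∀ γ : ℝ, 1 ≤ γ → d γ = 3 / 2) ∧
    IsGreatest {γ : ℝ | 0 ≤ γ ∧ d γ = 2} (1 / 3) := by
  intro d
  have hline := antitone_affine_of_nonpos (m := -(3 / 4)) (by norm_num) (9 / 4)
  have hclip : d = fun γ => max (3 / 2) (min 2 (-(3 / 4) * γ + 9 / 4)) :=
    funext (ite_ite_eq_max_min hline (by norm_num : (1 / 3 : ℝ) ≤ 1) (by norm_num) (by norm_num))
  have hcut : ∀ γ : ℝ, d γ = 2 ↔ γ ≤ 1 / 3 := by
    intro γ
    simp only [d]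
    split_ifs <;> constructor <;> intro h <;> linarith
  refine ⟨?_, ?_, fun γ _ => hcut γ, ?_, ⟨⟨by norm_num, (hcut _).mpr le_rfl⟩, ?_⟩⟩
  · rw [hclip]
    exact (continuous_const.max (continuous_const.min (by fun_prop))).continuousOn
  · rw [hclip]
    exact (antitone_const.max (antitone_const.min hline)).antitoneOn _
  · intro γ hγ
    simp only [d]
    split_ifs <;> linarith
  · exact fun γ hγ => (hcut γ).mp hγ.2
end
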